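/- arXiv:1707.02144 — 4 statements merged into one kernel-verified Lean document; each statement's English description precedes it below -/
import Mathlib

section
/- Suppose T ∈ ℚ⟦X⟧ is a formal power series with zero constant term satisfying T = X · exp(∑_{i≥1} T(X^i)/i), where T(X^i) denotes the substitution of X^i into T, the infinite sum converges coefficientwise (the i-th summand has order ≥ i), and exp denotes the formal power series exponential. Then its coefficients t(n) = coeff_{X^n} T satisfy t(1) = 1 and, for every n ≥ 2, (n−1)·t(n) = ∑_{i=1}^{n−1} t(n−i) · (∑_{m ∣ i} m·t(m)), the inner sum ranging over the positive divisors m of i. -/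
/-!
Write `S = ∑_{i≥1} T(X^i)/i`, so that `T = X · exp S`. Applying the Euler operator `X d/dX`
and the chain rule for `exp` gives `X T' = T + T · (X S')`. The `i`-th coefficient of `X S'`
is `i · s_i = ∑_{j ∣ i} (i/j) · t(i/j) = ∑_{m ∣ i} m · t(m)`, and comparing the `n`-th
coefficients on both sides yields the recurrence.
-/

open PowerSeries Filter Topology

/-- Composition `f ∘ g` of formal power series (substitution of `g` into `f`), defined
coefficientwise; this is the genuine substitution when `g` has zero constant term
(then the `k`-th summand `(coeff k f) • g^k` has order `≥ k`, so the sum converges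
coefficientwise). -/
noncomputable def psComp {R : Type*} [CommSemiring R] (f g : PowerSeries R) : PowerSeries R :=
  PowerSeries.mk fun n => ∑ k ∈ Finset.range (n + 1),
    PowerSeries.coeff k f * PowerSeries.coeff n (g ^ k)

namespace PowerSeries

variable {R : Type*}

theorem coeff_X_mul_derivative [CommSemiring R] (f : R⟦X⟧) (n : ℕ) :
    coeff n (X * d⁄dX R f) = n * coeff n f := by
  cases n with
  | zero => simp
  | succ n => rw [coeff_succ_X_mul, coeff_derivative, mul_comm]; push_cast; rfl

theorem coeff_mul_eq_sum_Icc_of_constantCoeff_eq_zero [CommSemiring R] {f g : R⟦X⟧}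
    (hf : constantCoeff f = 0) (hg : constantCoeff g = 0) (n : ℕ) :
    coeff n (f * g) = ∑ i ∈ Finset.Icc 1 (n - 1), coeff (n - i) f * coeff i g := by
  rw [mul_comm, coeff_mul,
    Finset.Nat.sum_antidiagonal_eq_sum_range_succ fun i j => coeff i g * coeff j f]
  refine (Finset.sum_subset (fun i hi => ?_) fun i hi hi' => ?_).symm.trans
    (Finset.sum_congr rfl fun i _ => mul_comm _ _)
  · simp only [Finset.mem_Icc, Finset.mem_range] at hi ⊢
    omega
  · simp only [Finset.mem_Icc, Finset.mem_range, not_and_or] at hi hi'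
    obtain rfl | rfl : i = 0 ∨ i = n := by omega
    · simp [hg]
    · simp [hf]

theorem derivative_exp_subst {A : Type*} [CommRing A] [Algebra ℚ A] {g : A⟦X⟧}
    (hg : constantCoeff g = 0) :
    d⁄dX A ((exp A).subst g) = (exp A).subst g * d⁄dX A g := by
  rw [derivative_subst (.of_constantCoeff_zero' hg), derivative_exp]

end PowerSeries

theorem Nat.natCast_mul_sum_divisors_div {K : Type*} [Field K] [CharZero K] (a : ℕ → K)
    (n : ℕ) : (n : K) * ∑ j ∈ n.divisors, a (n / j) / j = ∑ m ∈ n.divisors, m * a m := by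
  rw [Finset.mul_sum, ← Nat.sum_div_divisors n fun m => (m : K) * a m]
  refine Finset.sum_congr rfl fun j hj => ?_
  have hj0 : (j : K) ≠ 0 := Nat.cast_ne_zero.mpr (Nat.pos_of_mem_divisors hj).ne'
  rw [Nat.cast_div (Nat.dvd_of_mem_divisors hj) hj0]
  field_simp

theorem psComp_eq_subst {R : Type*} [CommRing R] (f : R⟦X⟧) {g : R⟦X⟧}
    (hg : constantCoeff g = 0) : psComp f g = f.subst g := by
  ext n
  rw [psComp, coeff_mk, coeff_subst' (.of_constantCoeff_zero' hg),
    finsum_eq_sum_of_support_subset (s := Finset.range (n + 1))]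
  · simp only [smul_eq_mul]
  · intro k hk
    contrapose! hk
    have hnk : (n : ℕ∞) < k := by simpa using hk
    simp [coeff_of_lt_order _ ((le_order_pow_of_constantCoeff_eq_zero k hg).trans_lt' hnk)]

theorem sum_Icc_coeff_psComp_X_pow_div {K : Type*} [Field K] (T : K⟦X⟧) (n : ℕ) :
    ∑ i ∈ Finset.Icc 1 n, coeff n (psComp T (X ^ i)) / i =
      ∑ j ∈ n.divisors, coeff (n / j) T / j := by
  rw [Nat.divisors, ← Finset.Ico_add_one_right_eq_Icc, Finset.sum_filter]
  refine Finset.sum_congr rfl fun i hi => ?_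
  have hi0 : i ≠ 0 := by
    simp only [Finset.mem_Ico] at hi
    omega
  rw [psComp_eq_subst _ (by simp [hi0]), coeff_subst_X_pow hi0]
  split_ifs <;> simp

/-- If `T ∈ ℚ⟦X⟧` has zero constant term and satisfies
`T = X · exp(∑_{i≥1} T(X^i)/i)` (the sum taken coefficientwise: the `i`-th summand has
order `≥ i`, so `coeff n` only sees `1 ≤ i ≤ n`), then its coefficients `t n = coeff n T`
satisfy `t 1 = 1` and `(n−1)·t(n) = ∑_{i=1}^{n−1} t(n−i)·(∑_{m ∣ i} m·t(m))` for `n ≥ 2`. -/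
theorem polya_tree_coefficient_recurrence
    (T : PowerSeries ℚ)
    (hT0 : PowerSeries.constantCoeff T = 0)
    (hT : T = (PowerSeries.X : PowerSeries ℚ) *
        psComp (PowerSeries.exp ℚ)
          (PowerSeries.mk fun n => ∑ i ∈ Finset.Icc 1 n,
            PowerSeries.coeff n (psComp T ((PowerSeries.X : PowerSeries ℚ) ^ i)) / (i : ℚ))) :
    PowerSeries.coeff 1 T = 1 ∧
      ∀ n : ℕ, 2 ≤ n →
        ((n : ℚ) - 1) * PowerSeries.coeff n T =
          ∑ i ∈ Finset.Icc 1 (n - 1),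
            PowerSeries.coeff (n - i) T *
              ∑ m ∈ Nat.divisors i, (m : ℚ) * PowerSeries.coeff m T := by
  set S : ℚ⟦X⟧ := mk fun n => ∑ i ∈ Finset.Icc 1 n, coeff n (psComp T (X ^ i)) / (i : ℚ)
    with hS
  have hS0 : constantCoeff S = 0 := by simp [hS]
  refine ⟨by simp [hT, psComp], fun n _ => ?_⟩
  rw [psComp_eq_subst _ hS0] at hT
  have hXS'0 : constantCoeff (X * d⁄dX ℚ S) = 0 := by simp
  have coeff_XS' (i : ℕ) : coeff i (X * d⁄dX ℚ S) = ∑ m ∈ i.divisors, (m : ℚ) * coeff m T := by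
    rw [coeff_X_mul_derivative, hS, coeff_mk, sum_Icc_coeff_psComp_X_pow_div]
    exact Nat.natCast_mul_sum_divisors_div (coeff · T) i
  have euler : X * d⁄dX ℚ T = T + T * (X * d⁄dX ℚ S) := by
    rw [hT, Derivation.leibniz, derivative_X, derivative_exp_subst hS0, smul_eq_mul, smul_eq_mul]
    ring
  have h := congrArg (coeff n) euler
  rw [coeff_X_mul_derivative, map_add, coeff_mul_eq_sum_Icc_of_constantCoeff_eq_zero hT0 hXS'0]
    at h
  simp_rw [coeff_XS'] at h
  linear_combination h
end

section
/- In ℚ⟦X⟧, with T = ∑_{n≥1} t(n)·X^n and D = ∑_{n≥0} d(n)·X^n, one has ∑_{k≥1} (k^k/k!)·(X·D)^k = T·(1−T)⁻¹ (the series 1−T is a unit since T has zero constant term, and the left-hand infinite sum converges coefficientwise since the k-th summand has order ≥ k). Equivalently, for every n, coeff_{X^n}( (1−T)·∑_{k=1}^{n} (k^k/k!)·(X·D)^k ) = t(n). -/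
/-!
Write `θ = X · d/dX` and `S = ∑ᵢ (∑_{m ∣ i} m t(m)) Xⁱ`. The two recurrences say exactly that
`θT = T (1 + S)` and `θD = D (S - θT)`. Hence `X D` and `T e^{-T}` solve the same equation
`θF = F (1 + S - θT)` and have the same coefficient of `X`, so `X D = T e^{-T}`. It remains to
substitute `x ↦ T` into `(1 - x) ∑_{k ≥ 1} (k^k / k!) (x e^{-x})^k = x`, whose coefficient
identity `∑_k (k^k / k!) (-k)^{j-k} / (j-k)! = 1` is `Δʲ[xʲ] = j!`; cutting the sum off at `k = n`
only changes terms divisible by `Xⁿ⁺¹`.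
-/

open PowerSeries Finset

namespace PowerSeries

variable {R : Type*} [CommSemiring R]

variable (R) in
noncomputable def eulerDeriv : Derivation R R⟦X⟧ R⟦X⟧ := (X : R⟦X⟧) • derivative R

theorem eulerDeriv_apply (f : R⟦X⟧) : eulerDeriv R f = X * d⁄dX R f := rfl

@[simp] theorem coeff_eulerDeriv (f : R⟦X⟧) (n : ℕ) :
    coeff n (eulerDeriv R f) = n * coeff n f := by
  rcases n with _ | n
  · simp [eulerDeriv_apply]
  · rw [eulerDeriv_apply, coeff_succ_X_mul, coeff_derivative]
    push_cast
    ring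

@[simp] theorem constantCoeff_eulerDeriv (f : R⟦X⟧) : constantCoeff (eulerDeriv R f) = 0 := by
  rw [← coeff_zero_eq_constantCoeff_apply, coeff_eulerDeriv, Nat.cast_zero, zero_mul]

theorem eulerDeriv_X : eulerDeriv R X = X := by simp [eulerDeriv_apply]

theorem derivative_rescale (a : R) (f : R⟦X⟧) :
    d⁄dX R (rescale a f) = C a * rescale a (d⁄dX R f) := by
  ext n
  simp only [coeff_derivative, coeff_rescale, coeff_C_mul, pow_succ]
  ring

theorem eulerDeriv_subst {R : Type*} [CommRing R] {f g : R⟦X⟧} (hg : HasSubst g) :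
    eulerDeriv R (f.subst g) = (d⁄dX R f).subst g * eulerDeriv R g := by
  rw [eulerDeriv_apply, eulerDeriv_apply, derivative_subst hg]
  ring

theorem coeff_mk_mul_mk (a b : ℕ → R) (n : ℕ) :
    coeff n (mk a * mk b) = ∑ i ∈ range (n + 1), a (n - i) * b i := by
  rw [mul_comm, coeff_mul,
    Nat.sum_antidiagonal_eq_sum_range_succ (fun i j => coeff i (mk b) * coeff j (mk a))]
  simp only [coeff_mk, mul_comm]

theorem constantCoeff_subst_of_constantCoeff_eq_zero {R : Type*} [CommRing R] {a : R⟦X⟧}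
    (ha : constantCoeff a = 0) (f : R⟦X⟧) :
    constantCoeff (f.subst a : R⟦X⟧) = constantCoeff f := by
  have := constantCoeff_subst_eq_zero ha (f - C (constantCoeff f)) (by simp)
  rwa [subst_sub (HasSubst.of_constantCoeff_zero' ha), subst_C, map_sub, sub_eq_zero] at this

section Field

variable {K : Type*} [Field K] [CharZero K]

/-- The coefficient of `Xⁿ` in `θf = f A` reads `(n - a) fₙ = ∑_{p < n} f_p A_{n-p}`. -/
theorem eq_zero_of_eulerDeriv_eq_mul {A f : K⟦X⟧} {a : ℕ} (hA : constantCoeff A = a)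
    (hf : eulerDeriv K f = f * A) (ha : coeff a f = 0) : f = 0 := by
  ext n
  induction n using Nat.strong_induction_on with
  | _ n ih =>
    obtain rfl | hna := eq_or_ne n a
    · simpa using ha
    have hcoeff := congrArg (coeff n) hf
    rw [coeff_eulerDeriv, coeff_mul,
      ← add_sum_erase _ _ (a := (n, 0)) (HasAntidiagonal.mem_antidiagonal.mpr (add_zero n)),
      sum_eq_zero, coeff_zero_eq_constantCoeff_apply, hA] at hcoeff
    · have : ((n : K) - a) * coeff n f = 0 := by linear_combination hcoeff
      simpa [sub_eq_zero, hna] using this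
    · rintro ⟨p, q⟩ hpq
      obtain ⟨hne, hpq⟩ := mem_erase.mp hpq
      rw [HasAntidiagonal.mem_antidiagonal] at hpq
      rw [ih p (by grind), map_zero, zero_mul]

theorem eq_of_eulerDeriv_eq_mul {A f g : K⟦X⟧} {a : ℕ} (hA : constantCoeff A = a)
    (hf : eulerDeriv K f = f * A) (hg : eulerDeriv K g = g * A) (ha : coeff a f = coeff a g) :
    f = g :=
  sub_eq_zero.mp <| eq_zero_of_eulerDeriv_eq_mul hA (by rw [map_sub, hf, hg, sub_mul])
    (by rw [map_sub, ha, sub_self])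

end Field

open Nat in
theorem sum_Icc_pow_self_div_factorial_mul_neg_pow_div_factorial {j : ℕ} (hj : j ≠ 0) :
    ∑ k ∈ Icc 1 j, (k : ℚ) ^ k / k ! * ((-k) ^ (j - k) / (j - k)!) = 1 := by
  have hΔ := fwdDiff_iter_eq_sum_shift (h := (1 : ℚ)) (fun r : ℚ => r ^ j) j 0
  rw [fwdDiff_iter_eq_factorial] at hΔ
  simp only [Pi.natCast_apply, zero_add, nsmul_eq_mul, mul_one, zsmul_eq_mul] at hΔ
  push_cast at hΔ
  calc ∑ k ∈ Icc 1 j, (k : ℚ) ^ k / k ! * ((-k) ^ (j - k) / (j - k)!)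
      = ∑ k ∈ Icc 1 j, (-1) ^ (j - k) * (j.choose k : ℚ) * k ^ j / j ! := by
        refine sum_congr rfl fun k hk => ?_
        have hkj : k ≤ j := (mem_Icc.mp hk).2
        rw [Nat.cast_choose ℚ hkj, neg_pow, ← Nat.add_sub_cancel' hkj, pow_add,
          Nat.add_sub_cancel_left]
        field_simp
    _ = (∑ k ∈ range (j + 1), (-1) ^ (j - k) * (j.choose k : ℚ) * k ^ j) / j ! := by
        rw [← sum_div]
        congr 1
        refine sum_subset (fun k hk => by grind) fun k _ hk => ?_
        obtain rfl : k = 0 := by grind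
        simp [hj]
    _ = 1 := by rw [← hΔ]; field_simp

noncomputable def lambertSum (N : ℕ) (f : ℚ⟦X⟧) : ℚ⟦X⟧ :=
  ∑ k ∈ Icc 1 N, C ((k : ℚ) ^ k / k.factorial) * f ^ k

theorem map_lambertSum (φ : ℚ⟦X⟧ →ₐ[ℚ] ℚ⟦X⟧) (N : ℕ) (f : ℚ⟦X⟧) :
    φ (lambertSum N f) = lambertSum N (φ f) := by
  simp [lambertSum, C_eq_algebraMap]

theorem coeff_lambertSum_X_mul_exp_neg {N m : ℕ} (hm : m ≤ N) :
    coeff m (lambertSum N (X * rescale (-1) (exp ℚ))) = if m = 0 then 0 else 1 := by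
  have hterm : ∀ k : ℕ,
      coeff m (C ((k : ℚ) ^ k / k.factorial) * (X * rescale (-1) (exp ℚ)) ^ k) =
      if k ≤ m then (k : ℚ) ^ k / k.factorial * ((-k) ^ (m - k) / (m - k).factorial) else 0 := by
    intro k
    rw [mul_pow, ← map_pow, exp_pow_eq_rescale_exp, rescale_rescale, coeff_C_mul,
      coeff_X_pow_mul']
    split_ifs <;> simp [coeff_rescale, coeff_exp, div_eq_mul_inv]
  rw [lambertSum, map_sum, sum_congr rfl fun k _ => hterm k,
    ← sum_subset (s₁ := Icc 1 m) (fun k hk => by grind) fun k _ hk => by grind]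
  rw [sum_congr rfl fun k hk => if_pos (mem_Icc.mp hk).2]
  split_ifs with hm0
  · simp [hm0]
  · exact sum_Icc_pow_self_div_factorial_mul_neg_pow_div_factorial hm0

theorem X_pow_succ_dvd_one_sub_X_mul_lambertSum_sub_X (N : ℕ) :
    X ^ (N + 1) ∣ (1 - X) * lambertSum N (X * rescale (-1) (exp ℚ)) - X := by
  rw [X_pow_dvd_iff]
  intro m hm
  rw [sub_mul, one_mul, map_sub, map_sub, coeff_X]
  rcases m with _ | m
  · rw [coeff_lambertSum_X_mul_exp_neg N.zero_le]
    simp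
  · rw [coeff_succ_X_mul, coeff_lambertSum_X_mul_exp_neg (by omega),
      coeff_lambertSum_X_mul_exp_neg (by omega)]
    by_cases hm0 : m = 0 <;> simp [hm0]

end PowerSeries

noncomputable def divisorSumSeries (t : ℕ → ℚ) : ℚ⟦X⟧ :=
  PowerSeries.mk fun i => ∑ m ∈ i.divisors, (m : ℚ) * t m

noncomputable def properDivisorSumSeries (t : ℕ → ℚ) : ℚ⟦X⟧ :=
  PowerSeries.mk fun i => ∑ m ∈ i.divisors.erase i, (m : ℚ) * t m

theorem divisorSumSeries_eq_add (t : ℕ → ℚ) :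
    divisorSumSeries t = properDivisorSumSeries t + eulerDeriv ℚ (PowerSeries.mk t) := by
  ext i
  rcases i.eq_zero_or_pos with rfl | hi
  · simp [divisorSumSeries, properDivisorSumSeries]
  · simp [divisorSumSeries, properDivisorSumSeries,
      ← sum_erase_add _ _ (Nat.mem_divisors_self i hi.ne')]

theorem eulerDeriv_mk_eq_mul_one_add_divisorSumSeries (t : ℕ → ℚ) (ht0 : t 0 = 0)
    (htrec : ∀ n : ℕ, 2 ≤ n →
      ((n : ℚ) - 1) * t n =
        ∑ i ∈ Icc 1 (n - 1), t (n - i) * ∑ m ∈ Nat.divisors i, (m : ℚ) * t m) :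
    eulerDeriv ℚ (PowerSeries.mk t) = PowerSeries.mk t * (1 + divisorSumSeries t) := by
  ext n
  rw [mul_one_add, map_add, divisorSumSeries, coeff_mk_mul_mk, coeff_eulerDeriv, coeff_mk]
  rcases lt_or_ge n 2 with hn | hn
  · interval_cases n <;> simp [sum_range_succ, ht0]
  · rw [← sum_subset (s₁ := Icc 1 (n - 1)) (fun i hi => by grind) fun i hi hi' => ?_]
    · linear_combination htrec n hn
    · obtain rfl | rfl : i = 0 ∨ i = n := by grind
      · simp
      · simp [ht0]

theorem eulerDeriv_mk_eq_mul_properDivisorSumSeries (t d : ℕ → ℚ) (hd1 : d 1 = 0)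
    (hdrec : ∀ n : ℕ, 2 ≤ n →
      (n : ℚ) * d n =
        ∑ i ∈ Icc 2 n, d (n - i) * ∑ m ∈ (Nat.divisors i).erase i, (m : ℚ) * t m) :
    eulerDeriv ℚ (PowerSeries.mk d) = PowerSeries.mk d * properDivisorSumSeries t := by
  ext n
  rw [properDivisorSumSeries, coeff_mk_mul_mk, coeff_eulerDeriv, coeff_mk]
  rcases lt_or_ge n 2 with hn | hn
  · interval_cases n <;> simp [sum_range_succ, hd1]
  · rw [hdrec n hn]
    refine sum_subset (fun i hi => by grind) fun i hi hi' => ?_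
    obtain rfl | rfl : i = 0 ∨ i = 1 := by grind
    · simp
    · simp

theorem X_mul_mk_eq_mul_subst_exp_neg (t d : ℕ → ℚ) (ht0 : t 0 = 0) (ht1 : t 1 = 1)
    (htrec : ∀ n : ℕ, 2 ≤ n →
      ((n : ℚ) - 1) * t n =
        ∑ i ∈ Icc 1 (n - 1), t (n - i) * ∑ m ∈ Nat.divisors i, (m : ℚ) * t m)
    (hd0 : d 0 = 1) (hd1 : d 1 = 0)
    (hdrec : ∀ n : ℕ, 2 ≤ n →
      (n : ℚ) * d n =
        ∑ i ∈ Icc 2 n, d (n - i) * ∑ m ∈ (Nat.divisors i).erase i, (m : ℚ) * t m) :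
    X * PowerSeries.mk d =
      PowerSeries.mk t * ((rescale (-1) (exp ℚ)).subst (PowerSeries.mk t) : ℚ⟦X⟧) := by
  have hT0 : constantCoeff (PowerSeries.mk t) = 0 := by simp [ht0]
  have hT : HasSubst (PowerSeries.mk t) := HasSubst.of_constantCoeff_zero' hT0
  set E : ℚ⟦X⟧ := (rescale (-1) (exp ℚ)).subst (PowerSeries.mk t)
  have hθE : eulerDeriv ℚ E = -(E * eulerDeriv ℚ (PowerSeries.mk t)) := by
    rw [eulerDeriv_subst hT, derivative_rescale, derivative_exp, map_neg, map_one, neg_one_mul,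
      ← coe_substAlgHom hT, map_neg, coe_substAlgHom, neg_mul]
  have hE0 : constantCoeff E = 1 := by
    rw [constantCoeff_subst_of_constantCoeff_eq_zero hT0, ← coeff_zero_eq_constantCoeff_apply,
      coeff_rescale]
    simp
  refine eq_of_eulerDeriv_eq_mul (A := 1 + properDivisorSumSeries t) (a := 1) ?_ ?_ ?_ ?_
  · simp [properDivisorSumSeries]
  · rw [Derivation.leibniz, eulerDeriv_X,
      eulerDeriv_mk_eq_mul_properDivisorSumSeries t d hd1 hdrec, smul_eq_mul, smul_eq_mul]
    ring
  · have hθT := eulerDeriv_mk_eq_mul_one_add_divisorSumSeries t ht0 htrec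
    rw [divisorSumSeries_eq_add] at hθT
    rw [Derivation.leibniz, hθE, smul_eq_mul, smul_eq_mul]
    linear_combination E * hθT
  · simp [coeff_mul, Nat.antidiagonal_succ, hd0, ht0, ht1, hE0]

/-- with `T = ∑_{n≥1} t(n)·X^n` and `D = ∑_{n≥0} d(n)·X^n` in `ℚ⟦X⟧`, one has
`∑_{k≥1} (k^k/k!)·(X·D)^k = T·(1−T)⁻¹`, expressed coefficientwise: for every `n`,
`coeff_{X^n}((1−T)·∑_{k=1}^{n} (k^k/k!)·(X·D)^k) = t n`. -/
theorem C_pointed_identity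
    (t d : ℕ → ℚ)
    (ht0 : t 0 = 0) (ht1 : t 1 = 1)
    (htrec : ∀ n : ℕ, 2 ≤ n →
      ((n : ℚ) - 1) * t n =
        ∑ i ∈ Finset.Icc 1 (n - 1), t (n - i) * ∑ m ∈ Nat.divisors i, (m : ℚ) * t m)
    (hd0 : d 0 = 1) (hd1 : d 1 = 0)
    (hdrec : ∀ n : ℕ, 2 ≤ n →
      (n : ℚ) * d n =
        ∑ i ∈ Finset.Icc 2 n, d (n - i) * ∑ m ∈ (Nat.divisors i).erase i, (m : ℚ) * t m) :
    ∀ n : ℕ,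
      PowerSeries.coeff n
        ((1 - PowerSeries.mk t) *
          ∑ k ∈ Finset.Icc 1 n,
            PowerSeries.C ((k : ℚ) ^ k / (k.factorial : ℚ)) *
              ((PowerSeries.X : PowerSeries ℚ) * PowerSeries.mk d) ^ k) = t n := by
  intro n
  have hT0 : constantCoeff (PowerSeries.mk t) = 0 := by simp [ht0]
  have hT : HasSubst (PowerSeries.mk t) := HasSubst.of_constantCoeff_zero' hT0
  have hdvd := map_dvd (substAlgHom hT) (X_pow_succ_dvd_one_sub_X_mul_lambertSum_sub_X n)
  rw [map_sub, map_mul, map_sub, map_one, map_pow, map_lambertSum, map_mul, substAlgHom_X,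
    coe_substAlgHom, ← X_mul_mk_eq_mul_subst_exp_neg t d ht0 ht1 htrec hd0 hd1 hdrec] at hdvd
  have hX : X ^ (n + 1) ∣ PowerSeries.mk t ^ (n + 1) := pow_dvd_pow_of_dvd (X_dvd_iff.mpr hT0) _
  have := X_pow_dvd_iff.mp (hX.trans hdvd) n n.lt_succ_self
  rwa [map_sub, coeff_mk, sub_eq_zero] at this
end

section
/- The radius of convergence of the power series ∑_{n≥0} d(n)·z^n equals √ρ. -/
open PowerSeries Filter Topology

/-- `r` is the radius of convergence of the power series `∑ a n · z^n`. -/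
def IsRadiusOfConv (a : ℕ → ℝ) (r : ℝ) : Prop :=
  (∀ s : ℝ, 0 ≤ s → s < r → Summable fun n => |a n| * s ^ n) ∧
  (∀ s : ℝ, r < s → ¬ Summable fun n => |a n| * s ^ n)

/-!
With `G(z) = ∑ᵢ gᵢ zⁱ`, `gᵢ = ∑_{m ∣ i, m < i} m·t(m)`, the recurrence for `d` reads
`n·d(n) = ∑ᵢ d(n-i)·gᵢ`, i.e. `z D' = D G`. A proper divisor `m` of `i` satisfies `2m ≤ i`, and
`t(m) ≥ 1` forces `ρ ≤ 1`, so `G` converges on `|z| < √ρ`; there the recurrence keeps `d(n) xⁿ`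
bounded once `n` exceeds `G(x)`, which gives convergence of `D`. Conversely the single term
`i = 2m` gives `2m·d(2m) ≥ m·t(m)`, so `D(s)` converging would make `T(s²)` converge.
-/

open Finset

theorem Nat.divisors_erase_self (n : ℕ) : n.divisors.erase n = n.properDivisors := by
  rcases eq_or_ne n 0 with rfl | hn
  · simp
  · rw [← Nat.insert_self_properDivisors hn, erase_insert Nat.self_notMem_properDivisors]

theorem Nat.two_mul_le_of_mem_properDivisors {m n : ℕ} (h : m ∈ n.properDivisors) :
    2 * m ≤ n := by
  obtain ⟨⟨c, rfl⟩, hlt⟩ := Nat.mem_properDivisors.1 h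
  rcases c with _ | _ | c
  · simp at hlt
  · simp at hlt
  · nlinarith

theorem IsRadiusOfConv.le_one {a : ℕ → ℝ} {r : ℝ} (h : IsRadiusOfConv a r)
    (ha : ∀ᶠ n in atTop, 1 ≤ |a n|) : r ≤ 1 := by
  by_contra! hr
  have hlim := (h.1 1 zero_le_one hr).tendsto_atTop_zero
  simp only [one_pow, mul_one] at hlim
  obtain ⟨n, h1, h2⟩ := (ha.and (hlim.eventually (gt_mem_nhds one_pos))).exists
  linarith

theorem summable_abs_mul_pow_of_le {a : ℕ → ℝ} {x s K : ℝ} (hK : ∀ n, |a n| * x ^ n ≤ K)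
    (hs : 0 ≤ s) (hsx : s < x) : Summable fun n => |a n| * s ^ n := by
  have hx : 0 < x := hs.trans_lt hsx
  refine .of_nonneg_of_le (fun n => by positivity) (fun n => ?_)
    ((summable_geometric_of_lt_one (div_nonneg hs hx.le) ((div_lt_one hx).2 hsx)).mul_left K)
  calc |a n| * s ^ n = |a n| * x ^ n * (s / x) ^ n := by rw [div_pow]; field_simp
    _ ≤ K * (s / x) ^ n := by gcongr; exact hK n

theorem summable_abs_mul_sq_pow_of_le {a b : ℕ → ℝ} {C s : ℝ} (hab : ∀ m, |a m| ≤ C * |b (2 * m)|)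
    (hb : Summable fun n => |b n| * s ^ n) : Summable fun m => |a m| * (s ^ 2) ^ m := by
  have hb2 : Summable fun m => |b (2 * m)| * s ^ (2 * m) :=
    hb.comp_injective fun _ _ h => by simpa using h
  refine .of_nonneg_of_le (fun m => by positivity) (fun m => ?_) (hb2.mul_left C)
  rw [← pow_mul, ← mul_assoc]
  exact mul_le_mul_of_nonneg_right (hab m) (by rw [pow_mul]; positivity)

section Recurrence

theorem nonneg_of_mul_eq_sum {K : Type*} [Field K] [LinearOrder K] [IsStrictOrderedRing K]
    {c g : ℕ → K} (hc0 : 0 ≤ c 0) (hg : ∀ i, 0 ≤ g i)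
    (hrec : ∀ n : ℕ, (n : K) * c n = ∑ i ∈ Icc 1 n, c (n - i) * g i) (n : ℕ) : 0 ≤ c n := by
  induction n using Nat.strong_induction_on with
  | _ n ih =>
  rcases n.eq_zero_or_pos with rfl | hn
  · exact hc0
  · have h : 0 ≤ (n : K) * c n :=
      hrec n ▸ sum_nonneg fun i hi => mul_nonneg (ih _ (by grind)) (hg i)
    exact (mul_nonneg_iff_of_pos_left (by exact_mod_cast hn)).1 h

theorem mul_le_of_mul_eq_sum {K : Type*} [Field K] [LinearOrder K] [IsStrictOrderedRing K]
    {c g : ℕ → K} (hc : ∀ n, 0 ≤ c n) (hg : ∀ i, 0 ≤ g i)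
    (hrec : ∀ n : ℕ, (n : K) * c n = ∑ i ∈ Icc 1 n, c (n - i) * g i) {n : ℕ} (hn : 1 ≤ n) :
    c 0 * g n ≤ n * c n := by
  rw [hrec]
  simpa using single_le_sum (f := fun i => c (n - i) * g i) (fun i _ => mul_nonneg (hc _) (hg i))
    (mem_Icc.2 ⟨hn, le_rfl⟩)

theorem exists_forall_le_of_mul_le_sum {c g : ℕ → ℝ} (hg : ∀ i, 0 ≤ g i) (hgs : Summable g)
    (hrec : ∀ n : ℕ, (n : ℝ) * c n ≤ ∑ i ∈ Icc 1 n, c (n - i) * g i) : ∃ K, ∀ n, c n ≤ K := by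
  set n₀ := ⌈∑' i, g i⌉₊ + 1
  set K := ∑ k ∈ range n₀, |c k|
  have hK : 0 ≤ K := sum_nonneg fun k _ => abs_nonneg _
  refine ⟨K, fun n => ?_⟩
  induction n using Nat.strong_induction_on with
  | _ n ih =>
  rcases lt_or_ge n n₀ with hn | hn
  · exact (le_abs_self _).trans (single_le_sum (fun k _ => abs_nonneg (c k)) (mem_range.2 hn))
  · have hS : ∑' i, g i ≤ n := (Nat.le_ceil _).trans (by exact_mod_cast (by omega : _ ≤ n))
    refine le_of_mul_le_mul_left ?_ (by exact_mod_cast (by omega : 0 < n) : (0 : ℝ) < n)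
    calc (n : ℝ) * c n ≤ ∑ i ∈ Icc 1 n, c (n - i) * g i := hrec n
      _ ≤ ∑ i ∈ Icc 1 n, K * g i :=
        sum_le_sum fun i hi => mul_le_mul_of_nonneg_right (ih _ (by grind)) (hg i)
      _ = K * ∑ i ∈ Icc 1 n, g i := (mul_sum ..).symm
      _ ≤ K * n := by gcongr; exact (hgs.sum_le_tsum _ fun i _ => hg i).trans hS
      _ = n * K := mul_comm ..

theorem exists_forall_mul_pow_le_of_mul_eq_sum {c g : ℕ → ℝ} {x : ℝ} (hg : ∀ i, 0 ≤ g i)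
    (hx : 0 ≤ x) (hgs : Summable fun i => g i * x ^ i)
    (hrec : ∀ n : ℕ, (n : ℝ) * c n = ∑ i ∈ Icc 1 n, c (n - i) * g i) : ∃ K, ∀ n, c n * x ^ n ≤ K :=
  exists_forall_le_of_mul_le_sum (fun i => mul_nonneg (hg i) (pow_nonneg hx i)) hgs fun n => by
    rw [← mul_assoc, hrec, sum_mul]
    refine (sum_congr rfl fun i hi => ?_).le
    rw [← pow_sub_mul_pow x (mem_Icc.1 hi).2]
    ring

end Recurrence

section ProperDivisorSum

def properDivisorSum {R : Type*} [Semiring R] (t : ℕ → R) (i : ℕ) : R :=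
  ∑ m ∈ i.properDivisors, (m : R) * t m

theorem Rat.cast_properDivisorSum (t : ℕ → ℚ) (i : ℕ) :
    ((properDivisorSum t i : ℚ) : ℝ) = properDivisorSum (fun m => (t m : ℝ)) i := by
  simp [properDivisorSum]

variable {R : Type*} [Semiring R] [PartialOrder R] [IsOrderedRing R] {t : ℕ → R}

theorem properDivisorSum_nonneg (ht : ∀ m, 0 ≤ t m) (i : ℕ) : 0 ≤ properDivisorSum t i :=
  sum_nonneg fun m _ => mul_nonneg m.cast_nonneg (ht m)

theorem mul_le_properDivisorSum (ht : ∀ m, 0 ≤ t m) {m i : ℕ} (hm : m ∈ i.properDivisors) :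
    m * t m ≤ properDivisorSum t i :=
  single_le_sum (f := fun k : ℕ => (k : R) * t k) (fun k _ => mul_nonneg k.cast_nonneg (ht k)) hm

end ProperDivisorSum

theorem properDivisorSum_mul_pow_le {t : ℕ → ℝ} {w A : ℝ} (hw0 : 0 ≤ w) (hw1 : w ≤ 1)
    (hA : ∀ m, |t m| * (w ^ 2) ^ m ≤ A) (i : ℕ) : properDivisorSum t i * w ^ i ≤ i ^ 2 * A := by
  have hA0 : 0 ≤ A := (abs_nonneg (t 0)).trans (by simpa using hA 0)
  have hterm : ∀ m ∈ i.properDivisors, (m : ℝ) * t m * w ^ i ≤ i * A := fun m hm => by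
    have hmi : (m : ℝ) ≤ i := by exact_mod_cast (Nat.mem_properDivisors.1 hm).2.le
    have hpow : w ^ i ≤ (w ^ 2) ^ m := by
      rw [← pow_mul]; exact pow_le_pow_of_le_one hw0 hw1 (Nat.two_mul_le_of_mem_properDivisors hm)
    calc (m : ℝ) * t m * w ^ i ≤ m * (|t m| * (w ^ 2) ^ m) := by
          rw [mul_assoc]
          exact mul_le_mul_of_nonneg_left
            (mul_le_mul (le_abs_self _) hpow (by positivity) (abs_nonneg _)) m.cast_nonneg
      _ ≤ i * A := mul_le_mul hmi (hA m) (by positivity) (by positivity)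
  have hcard : (i.properDivisors.card : ℝ) ≤ i := by
    exact_mod_cast
      (card_le_card Nat.properDivisors_subset_divisors).trans (Nat.card_divisors_le_self i)
  calc properDivisorSum t i * w ^ i = ∑ m ∈ i.properDivisors, (m : ℝ) * t m * w ^ i := sum_mul ..
    _ ≤ i.properDivisors.card * (i * A) := by simpa using sum_le_card_nsmul _ _ _ hterm
    _ ≤ i * (i * A) := by gcongr
    _ = i ^ 2 * A := by ring

theorem summable_properDivisorSum_mul_pow {t : ℕ → ℝ} {w x A : ℝ} (ht : ∀ m, 0 ≤ t m)
    (hw1 : w ≤ 1) (hA : ∀ m, |t m| * (w ^ 2) ^ m ≤ A) (hx : 0 ≤ x) (hxw : x < w) :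
    Summable fun i => properDivisorSum t i * x ^ i := by
  have hw : 0 < w := hx.trans_lt hxw
  have hq : ‖x / w‖ < 1 := by
    rw [Real.norm_of_nonneg (by positivity)]; exact (div_lt_one hw).2 hxw
  refine .of_nonneg_of_le (fun i => mul_nonneg (properDivisorSum_nonneg ht i) (pow_nonneg hx i))
    (fun i => ?_) ((summable_pow_mul_geometric_of_norm_lt_one 2 hq).mul_left A)
  calc properDivisorSum t i * x ^ i = properDivisorSum t i * w ^ i * (x / w) ^ i := by
        rw [div_pow]; field_simp
    _ ≤ i ^ 2 * A * (x / w) ^ i :=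
        mul_le_mul_of_nonneg_right (properDivisorSum_mul_pow_le hw.le hw1 hA i) (by positivity)
    _ = A * ((i : ℝ) ^ 2 * (x / w) ^ i) := by ring

section PolyaTrees

variable {t d : ℕ → ℚ}

theorem one_le_of_treeRecurrence (ht1 : t 1 = 1)
    (htrec : ∀ n : ℕ, 2 ≤ n →
      ((n : ℚ) - 1) * t n =
        ∑ i ∈ Finset.Icc 1 (n - 1), t (n - i) * ∑ m ∈ Nat.divisors i, (m : ℚ) * t m)
    {n : ℕ} (hn : 1 ≤ n) : 1 ≤ t n := by
  induction n using Nat.strong_induction_on with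
  | _ n ih =>
  obtain rfl | ⟨k, rfl⟩ : n = 1 ∨ ∃ k, n = k + 2 := by
    rcases n with _ | _ | k <;> simp_all
  · exact ht1.ge
  have hpos : ∀ m, 1 ≤ m → m ≤ k + 1 → 0 ≤ t m := fun m h1 h2 =>
    zero_le_one.trans (ih m (by omega) h1)
  have hσ : ∀ i ∈ Icc 1 (k + 1), 0 ≤ ∑ m ∈ i.divisors, (m : ℚ) * t m := fun i hi =>
    sum_nonneg fun m hm => mul_nonneg m.cast_nonneg
      (hpos m (Nat.pos_of_mem_divisors hm) ((Nat.divisor_le hm).trans (mem_Icc.1 hi).2))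
  have key : ((k : ℚ) + 1) * 1 ≤ (k + 1) * t (k + 2) := calc
    ((k : ℚ) + 1) * 1 ≤ ((k + 1 : ℕ) : ℚ) * t (k + 1) := by
        push_cast; gcongr; exact ih (k + 1) (by omega) (by omega)
    _ ≤ ∑ m ∈ (k + 1).divisors, (m : ℚ) * t m :=
        single_le_sum (f := fun m : ℕ => (m : ℚ) * t m)
          (fun m hm => mul_nonneg m.cast_nonneg (hpos m (Nat.pos_of_mem_divisors hm)
            (Nat.divisor_le hm))) (Nat.mem_divisors_self _ (by omega))
    _ = t (k + 2 - (k + 1)) * ∑ m ∈ (k + 1).divisors, (m : ℚ) * t m := by simp [ht1]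
    _ ≤ ∑ i ∈ Icc 1 (k + 1), t (k + 2 - i) * ∑ m ∈ i.divisors, (m : ℚ) * t m :=
        single_le_sum (fun i hi => mul_nonneg (hpos _ (by grind) (by grind)) (hσ i hi))
          (by simp)
    _ = (k + 1) * t (k + 2) := by
        rw [← show k + 2 - 1 = k + 1 from rfl, ← htrec (k + 2) (by omega)]; push_cast; ring
  exact le_of_mul_le_mul_left key (by positivity)

theorem mul_eq_sum_properDivisorSum (hd1 : d 1 = 0)
    (hdrec : ∀ n : ℕ, 2 ≤ n →
      (n : ℚ) * d n =
        ∑ i ∈ Finset.Icc 2 n, d (n - i) * ∑ m ∈ (Nat.divisors i).erase i, (m : ℚ) * t m)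
    (n : ℕ) : (n : ℚ) * d n = ∑ i ∈ Icc 1 n, d (n - i) * properDivisorSum t i := by
  rcases n with _ | _ | n
  · simp
  · simp [hd1, properDivisorSum]
  · rw [← insert_Icc_add_one_left_eq_Icc (by omega), sum_insert (by simp)]
    simpa [properDivisorSum, Nat.divisors_erase_self, add_assoc, one_add_one_eq_two]
      using hdrec (n + 2) (by omega)

theorem le_two_mul_of_forestRecurrence (ht0 : t 0 = 0) (ht : ∀ m, 0 ≤ t m) (hd : ∀ n, 0 ≤ d n)
    (hd0 : d 0 = 1)
    (hrec : ∀ n : ℕ, (n : ℚ) * d n = ∑ i ∈ Icc 1 n, d (n - i) * properDivisorSum t i)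
    (m : ℕ) : t m ≤ 2 * d (2 * m) := by
  rcases m.eq_zero_or_pos with rfl | hm
  · simp [ht0, hd0]
  have h1 : (m : ℚ) * t m ≤ properDivisorSum t (2 * m) :=
    mul_le_properDivisorSum ht (Nat.mem_properDivisors.2 ⟨dvd_mul_left m 2, by omega⟩)
  have h2 := mul_le_of_mul_eq_sum hd (properDivisorSum_nonneg ht) hrec (n := 2 * m) (by omega)
  rw [hd0, one_mul] at h2
  refine le_of_mul_le_mul_left (a := (m : ℚ)) ?_ (by exact_mod_cast hm)
  push_cast at h2
  linarith

end PolyaTrees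

/-- the radius of convergence of `∑_{n≥0} d(n)·z^n` equals `√ρ`. -/
theorem dForest_radius_of_convergence
    (t d : ℕ → ℚ)
    (ht0 : t 0 = 0) (ht1 : t 1 = 1)
    (htrec : ∀ n : ℕ, 2 ≤ n →
      ((n : ℚ) - 1) * t n =
        ∑ i ∈ Finset.Icc 1 (n - 1), t (n - i) * ∑ m ∈ Nat.divisors i, (m : ℚ) * t m)
    (hd0 : d 0 = 1) (hd1 : d 1 = 0)
    (hdrec : ∀ n : ℕ, 2 ≤ n →
      (n : ℚ) * d n =
        ∑ i ∈ Finset.Icc 2 n, d (n - i) * ∑ m ∈ (Nat.divisors i).erase i, (m : ℚ) * t m)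
    (ρ : ℝ) (hρ : IsRadiusOfConv (fun n => (t n : ℝ)) ρ) :
    IsRadiusOfConv (fun n => (d n : ℝ)) (Real.sqrt ρ) := by
  have ht : ∀ n, 0 ≤ t n := fun n => n.eq_zero_or_pos.elim (fun h => h ▸ ht0.ge)
    fun h => zero_le_one.trans (one_le_of_treeRecurrence ht1 htrec h)
  have hrec := mul_eq_sum_properDivisorSum hd1 hdrec
  have hd : ∀ n, 0 ≤ d n :=
    nonneg_of_mul_eq_sum (hd0 ▸ zero_le_one) (properDivisorSum_nonneg ht) hrec
  have htR : ∀ n, (0 : ℝ) ≤ t n := fun n => by exact_mod_cast ht n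
  have hdR : ∀ n, (0 : ℝ) ≤ d n := fun n => by exact_mod_cast hd n
  have hρ1 : ρ ≤ 1 := hρ.le_one <| eventually_atTop.2 ⟨1, fun n hn => by
    rw [abs_of_nonneg (htR n)]; exact_mod_cast one_le_of_treeRecurrence ht1 htrec hn⟩
  refine ⟨fun s hs0 hs => ?_, fun s hs hsum => ?_⟩
  · obtain ⟨w, hsw, hw⟩ := exists_between hs
    obtain ⟨x, hsx, hxw⟩ := exists_between hsw
    obtain ⟨A, hA⟩ := (hρ.1 (w ^ 2) (sq_nonneg w)
      ((Real.lt_sqrt (by linarith)).1 hw)).tendsto_atTop_zero.bddAbove_range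
    have hG := summable_properDivisorSum_mul_pow htR (hw.le.trans (Real.sqrt_le_one.2 hρ1))
      (fun m => hA ⟨m, rfl⟩) (hs0.trans hsx.le) hxw
    obtain ⟨K, hK⟩ := exists_forall_mul_pow_le_of_mul_eq_sum (c := fun n => (d n : ℝ))
      (properDivisorSum_nonneg htR) (hs0.trans hsx.le) hG
      fun n => by simpa [Rat.cast_properDivisorSum] using congrArg (Rat.cast (K := ℝ)) (hrec n)
    exact summable_abs_mul_pow_of_le (fun n => (abs_of_nonneg (hdR n)).symm ▸ hK n) hs0 hsx
  · refine hρ.2 (s ^ 2) ?_ (summable_abs_mul_sq_pow_of_le (C := 2) (fun m => ?_) hsum)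
    · exact (Real.sqrt_lt' ((Real.sqrt_nonneg ρ).trans_lt hs)).1 hs
    · rw [abs_of_nonneg (htR m), abs_of_nonneg (hdR _)]
      exact_mod_cast le_two_mul_of_forestRecurrence ht0 ht hd hd0 hrec m
end

section
/- Let t₂ : ℕ → ℚ be the sequence with t₂(1) = 1, t₂(n) = 0 for all even n and for n = 0, and, for odd n ≥ 3, t₂(n) = (1/2)·∑_{i=1}^{n−2} t₂(i)·t₂(n−1−i) + (1/2)·t₂((n−1)/2). Let τ be the radius of convergence of ∑_{n≥1} t₂(n)·z^n. Then 0 < τ < 1 and ∑' n, t₂(n)·τ^n = 1/τ (i.e. T₂(τ) = τ^{−1}, with convergence of the series at z = τ). -/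
/-!
Write `T(x) = ∑ t₂(n) xⁿ` and `M = T(x²)`. The coefficients are nonnegative and bounded by the
Catalan numbers, so `τ > 0`. For `0 < x` with `M` finite, truncating the functional equation
`T(x) = x + x T(x)² / 2 + x M / 2` shows that `T(x)` is finite iff the quadratic
`w = x + x w² / 2 + x M / 2` has a real root, i.e. iff `2x² + x² M ≤ 1`: the partial sums of `T(x)`
stay below the smaller root, and conversely `T(x)` itself satisfies the equation. Since `τ² < τ`,
`x ↦ T(x²)` is continuous at `τ`, so this discriminant condition holds with equality at `x = τ`
(a strict inequality would persist beyond `τ`); there the quadratic has the double root `1 / τ`.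
-/

open Filter Topology

open Finset

theorem catalan_le_catalan_succ (n : ℕ) : catalan n ≤ catalan (n + 1) := by
  rw [catalan_succ']
  simpa using single_le_sum (f := fun p : ℕ × ℕ => catalan p.1 * catalan p.2)
    (fun _ _ => Nat.zero_le _) (mem_antidiagonal.2 (add_zero n) : (n, 0) ∈ antidiagonal n)

theorem catalan_mono : Monotone catalan :=
  monotone_nat_of_le_succ catalan_le_catalan_succ

theorem catalan_le_four_pow (n : ℕ) : catalan n ≤ 4 ^ n :=
  calc catalan n ≤ (n + 1) * catalan n := Nat.le_mul_of_pos_left _ n.succ_pos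
    _ = n.centralBinom := succ_mul_catalan_eq_centralBinom n
    _ ≤ 4 ^ n := Nat.centralBinom_le_four_pow n

theorem sum_range_sum_antidiagonal_eq {M : Type*} [AddCommMonoid M] (g : ℕ → ℕ → M) (N : ℕ) :
    ∑ n ∈ range N, ∑ p ∈ antidiagonal n, g p.1 p.2 =
      ∑ i ∈ range N, ∑ j ∈ range (N - i), g i j := by
  rw [← sum_range_diag_flip]
  exact sum_congr rfl fun n _ => Nat.sum_antidiagonal_eq_sum_range_succ g n

section AntidiagonalSums

variable {R : Type*} [CommSemiring R] [PartialOrder R] [IsOrderedRing R] {f : ℕ → R}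

theorem sum_range_sum_antidiagonal_le_sq (hf : ∀ n, 0 ≤ f n) (N : ℕ) :
    ∑ n ∈ range N, ∑ p ∈ antidiagonal n, f p.1 * f p.2 ≤ (∑ n ∈ range N, f n) ^ 2 := by
  rw [sum_range_sum_antidiagonal_eq (fun i j => f i * f j), sq, sum_mul_sum]
  exact sum_le_sum fun i _ => sum_le_sum_of_subset_of_nonneg
    (range_subset_range.2 (Nat.sub_le N i)) fun j _ _ => mul_nonneg (hf i) (hf j)

theorem sq_sum_range_le_sum_range_sum_antidiagonal (hf : ∀ n, 0 ≤ f n) (N : ℕ) :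
    (∑ n ∈ range N, f n) ^ 2 ≤ ∑ n ∈ range (2 * N), ∑ p ∈ antidiagonal n, f p.1 * f p.2 := by
  rw [sum_range_sum_antidiagonal_eq (fun i j => f i * f j), sq, sum_mul_sum]
  calc ∑ i ∈ range N, ∑ j ∈ range N, f i * f j
      ≤ ∑ i ∈ range N, ∑ j ∈ range (2 * N - i), f i * f j :=
        sum_le_sum fun i hi => sum_le_sum_of_subset_of_nonneg
          (range_subset_range.2 (by rw [mem_range] at hi; omega))
          fun j _ _ => mul_nonneg (hf i) (hf j)
    _ ≤ ∑ i ∈ range (2 * N), ∑ j ∈ range (2 * N - i), f i * f j :=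
        sum_le_sum_of_subset_of_nonneg (range_subset_range.2 (by omega))
          fun i _ _ => sum_nonneg fun j _ => mul_nonneg (hf i) (hf j)

end AntidiagonalSums

theorem sum_range_two_mul_ite_even {M : Type*} [AddCommMonoid M] (g : ℕ → M) (N : ℕ) :
    ∑ n ∈ range (2 * N), (if Even n then g (n / 2) else 0) = ∑ k ∈ range N, g k := by
  induction N with
  | zero => simp
  | succ N ih =>
    rw [show 2 * (N + 1) = 2 * N + 1 + 1 by ring, sum_range_succ, sum_range_succ, ih,
      sum_range_succ]
    simp

theorem continuousAt_tsum_mul_pow {a : ℕ → ℝ} {c y : ℝ}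
    (hc : Summable fun n => |a n| * c ^ n) (hy : |y| < c) :
    ContinuousAt (fun x => ∑' n, a n * x ^ n) y := by
  have hon : ContinuousOn (fun x => ∑' n, a n * x ^ n) (Set.Icc (-c) c) :=
    continuousOn_tsum (fun n => (continuous_const.mul (continuous_pow n)).continuousOn) hc
      fun n x hx => by
        rw [norm_mul, norm_pow, Real.norm_eq_abs, Real.norm_eq_abs]
        exact mul_le_mul_of_nonneg_left (pow_le_pow_left₀ (abs_nonneg x) (abs_le.2 hx) n)
          (abs_nonneg _)
  exact hon.continuousAt (Icc_mem_nhds (by linarith [neg_abs_le y]) (by linarith [le_abs_self y]))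

namespace IsRadiusOfConv

variable {a : ℕ → ℝ} {r s : ℝ}

theorem summable_of_nonneg (h : IsRadiusOfConv a r) (ha : ∀ n, 0 ≤ a n) (hs0 : 0 ≤ s)
    (hs : s < r) : Summable fun n => a n * s ^ n := by
  simpa only [abs_of_nonneg (ha _)] using h.1 s hs0 hs

theorem le_of_summable_of_nonneg (h : IsRadiusOfConv a r) (ha : ∀ n, 0 ≤ a n)
    (hs : Summable fun n => a n * s ^ n) : s ≤ r :=
  not_lt.1 fun hrs => h.2 s hrs (by simpa only [abs_of_nonneg (ha _)] using hs)

end IsRadiusOfConv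

/-- Comparing the coefficients of `z ^ (n + 1)` in `T(z) = z + z T(z)² / 2 + z T(z²) / 2`. -/
structure IsBinaryPolyaSeq (a : ℕ → ℝ) : Prop where
  zero : a 0 = 0
  succ (n : ℕ) : a (n + 1) = (if n = 0 then 1 else 0) +
    (∑ p ∈ antidiagonal n, a p.1 * a p.2) / 2 + (if Even n then a (n / 2) else 0) / 2

namespace IsBinaryPolyaSeq

variable {a : ℕ → ℝ}

theorem nonneg (ha : IsBinaryPolyaSeq a) (n : ℕ) : 0 ≤ a n := by
  induction n using Nat.strong_induction_on with
  | _ n ih =>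
    rcases n with _ | n
    · exact ha.zero.ge
    have hconv : 0 ≤ ∑ p ∈ antidiagonal n, a p.1 * a p.2 :=
      sum_nonneg fun p hp => mul_nonneg (ih _ (Nat.antidiagonal.fst_lt hp))
        (ih _ (Nat.antidiagonal.snd_lt hp))
    have hhalf : 0 ≤ if Even n then a (n / 2) else 0 := by
      split_ifs
      exacts [ih _ (by omega), le_rfl]
    rw [ha.succ]
    positivity

theorem le_catalan (ha : IsBinaryPolyaSeq a) (n : ℕ) : a n ≤ catalan n := by
  induction n using Nat.strong_induction_on with
  | _ n ih =>
    rcases n with _ | n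
    · simp [ha.zero]
    rcases n.eq_zero_or_pos with rfl | hn
    · simp [ha.succ 0, ha.zero]
    have hconv : ∑ p ∈ antidiagonal n, a p.1 * a p.2 ≤ catalan (n + 1) := by
      rw [catalan_succ']
      push_cast
      exact sum_le_sum fun p hp => mul_le_mul (ih _ (Nat.antidiagonal.fst_lt hp))
        (ih _ (Nat.antidiagonal.snd_lt hp)) (ha.nonneg _) (by positivity)
    have hhalf : (if Even n then a (n / 2) else 0) ≤ catalan (n + 1) := by
      split_ifs
      · exact (ih _ (by omega)).trans (by exact_mod_cast catalan_mono (by omega))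
      · positivity
    rw [ha.succ, if_neg hn.ne']
    linarith

theorem le_four_pow (ha : IsBinaryPolyaSeq a) (n : ℕ) : a n ≤ 4 ^ n :=
  (ha.le_catalan n).trans (by exact_mod_cast catalan_le_four_pow n)

theorem term_succ (ha : IsBinaryPolyaSeq a) (x : ℝ) (n : ℕ) :
    a (n + 1) * x ^ (n + 1) = x * ((if n = 0 then 1 else 0) +
      (∑ p ∈ antidiagonal n, a p.1 * x ^ p.1 * (a p.2 * x ^ p.2)) / 2 +
      (if Even n then a (n / 2) * (x ^ 2) ^ (n / 2) else 0) / 2) := by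
  have hconv : ∑ p ∈ antidiagonal n, a p.1 * x ^ p.1 * (a p.2 * x ^ p.2) =
      (∑ p ∈ antidiagonal n, a p.1 * a p.2) * x ^ n := by
    rw [sum_mul]
    refine sum_congr rfl fun p hp => ?_
    rw [← mem_antidiagonal.1 hp, pow_add]
    ring
  have hhalf : (if Even n then a (n / 2) * (x ^ 2) ^ (n / 2) else 0) =
      (if Even n then a (n / 2) else 0) * x ^ n := by
    split_ifs with h
    · rw [← pow_mul, Nat.mul_div_cancel' h.two_dvd]
    · simp
  rw [ha.succ, hconv, hhalf, pow_succ]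
  rcases eq_or_ne n 0 with rfl | hn
  · simp
    ring
  · simp only [if_neg hn]
    ring

theorem sum_range_succ_eq (ha : IsBinaryPolyaSeq a) (x : ℝ) (N : ℕ) :
    ∑ n ∈ range (N + 1), a n * x ^ n = x * ((∑ n ∈ range N, if n = 0 then 1 else 0) +
      (∑ n ∈ range N, ∑ p ∈ antidiagonal n, a p.1 * x ^ p.1 * (a p.2 * x ^ p.2)) / 2 +
      (∑ n ∈ range N, if Even n then a (n / 2) * (x ^ 2) ^ (n / 2) else 0) / 2) := by
  rw [sum_range_succ', ha.zero, zero_mul, add_zero]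
  simp_rw [ha.term_succ x]
  rw [← mul_sum, sum_add_distrib, sum_add_distrib, sum_div, sum_div]

theorem sum_range_succ_le (ha : IsBinaryPolyaSeq a) {x : ℝ} (hx : 0 ≤ x) (N : ℕ) :
    ∑ n ∈ range (N + 1), a n * x ^ n ≤ x + x / 2 * (∑ n ∈ range N, a n * x ^ n) ^ 2 +
      x / 2 * ∑ k ∈ range N, a k * (x ^ 2) ^ k := by
  have hf (n : ℕ) : 0 ≤ a n * x ^ n := mul_nonneg (ha.nonneg n) (pow_nonneg hx n)
  have hone : (∑ n ∈ range N, if n = 0 then (1 : ℝ) else 0) ≤ 1 := by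
    rw [sum_ite_eq']
    split_ifs <;> norm_num
  have hhalf : (∑ n ∈ range N, if Even n then a (n / 2) * (x ^ 2) ^ (n / 2) else 0) ≤
      ∑ k ∈ range N, a k * (x ^ 2) ^ k := by
    rw [← sum_range_two_mul_ite_even (fun k => a k * (x ^ 2) ^ k)]
    refine sum_le_sum_of_subset_of_nonneg (range_subset_range.2 (by omega)) fun n _ _ => ?_
    split_ifs
    exacts [mul_nonneg (ha.nonneg _) (by positivity), le_rfl]
  rw [ha.sum_range_succ_eq]
  calc _ ≤ x * (1 + (∑ n ∈ range N, a n * x ^ n) ^ 2 / 2 +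
        (∑ k ∈ range N, a k * (x ^ 2) ^ k) / 2) := by
        gcongr
        exact sum_range_sum_antidiagonal_le_sq hf N
    _ = _ := by ring

theorem le_sum_range (ha : IsBinaryPolyaSeq a) {x : ℝ} (hx : 0 ≤ x) {N : ℕ} (hN : N ≠ 0) :
    x + x / 2 * (∑ n ∈ range N, a n * x ^ n) ^ 2 + x / 2 * ∑ k ∈ range N, a k * (x ^ 2) ^ k ≤
      ∑ n ∈ range (2 * N + 1), a n * x ^ n := by
  have hf (n : ℕ) : 0 ≤ a n * x ^ n := mul_nonneg (ha.nonneg n) (pow_nonneg hx n)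
  have hone : (∑ n ∈ range (2 * N), if n = 0 then (1 : ℝ) else 0) = 1 := by
    rw [sum_ite_eq', if_pos (mem_range.2 (by omega))]
  rw [ha.sum_range_succ_eq, hone, sum_range_two_mul_ite_even (fun k => a k * (x ^ 2) ^ k)]
  calc _ = x * (1 + (∑ n ∈ range N, a n * x ^ n) ^ 2 / 2 +
        (∑ k ∈ range N, a k * (x ^ 2) ^ k) / 2) := by ring
    _ ≤ _ := by
        gcongr
        exact sq_sum_range_le_sum_range_sum_antidiagonal hf N

theorem summable_of_le (ha : IsBinaryPolyaSeq a) {x w : ℝ} (hx : 0 ≤ x)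
    (hx2 : Summable fun n => a n * (x ^ 2) ^ n) (hw : 0 ≤ w)
    (hfix : x + x / 2 * w ^ 2 + x / 2 * ∑' n, a n * (x ^ 2) ^ n ≤ w) :
    Summable fun n => a n * x ^ n := by
  have hf (n : ℕ) : 0 ≤ a n * x ^ n := mul_nonneg (ha.nonneg n) (pow_nonneg hx n)
  refine summable_of_sum_range_le (c := w) hf fun N => ?_
  induction N with
  | zero => simpa using hw
  | succ N ih =>
    calc _ ≤ _ := ha.sum_range_succ_le hx N
      _ ≤ x + x / 2 * w ^ 2 + x / 2 * ∑' n, a n * (x ^ 2) ^ n := by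
        gcongr
        · exact sum_nonneg fun n _ => hf n
        · exact Summable.sum_le_tsum _ (fun n _ => mul_nonneg (ha.nonneg n) (by positivity)) hx2
      _ ≤ w := hfix

theorem add_le_tsum (ha : IsBinaryPolyaSeq a) {x : ℝ} (hx : 0 ≤ x)
    (hx1 : Summable fun n => a n * x ^ n) (hx2 : Summable fun n => a n * (x ^ 2) ^ n) :
    x + x / 2 * (∑' n, a n * x ^ n) ^ 2 + x / 2 * ∑' n, a n * (x ^ 2) ^ n ≤
      ∑' n, a n * x ^ n := by
  have hlim : Tendsto (fun N => x + x / 2 * (∑ n ∈ range N, a n * x ^ n) ^ 2 +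
      x / 2 * ∑ k ∈ range N, a k * (x ^ 2) ^ k) atTop
      (𝓝 (x + x / 2 * (∑' n, a n * x ^ n) ^ 2 + x / 2 * ∑' n, a n * (x ^ 2) ^ n)) :=
    (((hx1.hasSum.tendsto_sum_nat.pow 2).const_mul _).const_add _).add
      (hx2.hasSum.tendsto_sum_nat.const_mul _)
  refine le_of_tendsto hlim ((eventually_ne_atTop 0).mono fun N hN => ?_)
  exact (ha.le_sum_range hx hN).trans
    (Summable.sum_le_tsum _ (fun n _ => mul_nonneg (ha.nonneg n) (pow_nonneg hx n)) hx1)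

theorem summable_iff (ha : IsBinaryPolyaSeq a) {x : ℝ} (hx : 0 < x)
    (hx2 : Summable fun n => a n * (x ^ 2) ^ n) :
    (Summable fun n => a n * x ^ n) ↔ 2 * x ^ 2 + x ^ 2 * ∑' n, a n * (x ^ 2) ^ n ≤ 1 := by
  set M := ∑' n, a n * (x ^ 2) ^ n
  have hM : 0 ≤ M := tsum_nonneg fun n => mul_nonneg (ha.nonneg n) (by positivity)
  constructor
  · intro hx1
    have := ha.add_le_tsum hx.le hx1 hx2
    nlinarith [sq_nonneg (x * ∑' n, a n * x ^ n - 1)]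
  · intro hdisc
    set Δ := 1 - 2 * x ^ 2 - x ^ 2 * M
    have hΔ : 0 ≤ Δ := by linarith
    have hsqrt : √Δ ≤ 1 := Real.sqrt_le_one.2 (by nlinarith)
    -- the smaller root of `x w² / 2 - w + x + x M / 2 = 0`
    refine ha.summable_of_le hx.le hx2 (w := (1 - √Δ) / x) (div_nonneg (by linarith) hx.le)
      (le_of_eq ?_)
    field_simp
    linear_combination Real.sq_sqrt hΔ

variable {τ : ℝ}

theorem radius_pos (ha : IsBinaryPolyaSeq a) (hτ : IsRadiusOfConv a τ) : 0 < τ := by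
  refine lt_of_lt_of_le (by norm_num) (hτ.le_of_summable_of_nonneg ha.nonneg (s := 1 / 8) ?_)
  refine Summable.of_nonneg_of_le (fun n => mul_nonneg (ha.nonneg n) (by positivity)) (fun n => ?_)
    (summable_geometric_of_lt_one (by norm_num : (0 : ℝ) ≤ 1 / 2) (by norm_num))
  calc a n * (1 / 8) ^ n ≤ 4 ^ n * (1 / 8) ^ n := by gcongr; exact ha.le_four_pow n
    _ = (1 / 2) ^ n := by rw [← mul_pow]; norm_num

theorem radius_lt_one (ha : IsBinaryPolyaSeq a) (hτ : IsRadiusOfConv a τ) : τ < 1 := by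
  by_contra! h
  -- `2 (4/5)² > 1`, so the discriminant condition fails at `4/5`.
  have hdisc := (ha.summable_iff (x := 4 / 5) (by norm_num)
    (hτ.summable_of_nonneg ha.nonneg (by norm_num) (by linarith))).1
    (hτ.summable_of_nonneg ha.nonneg (by norm_num) (by linarith))
  have hM : 0 ≤ ∑' n, a n * ((4 / 5 : ℝ) ^ 2) ^ n :=
    tsum_nonneg fun n => mul_nonneg (ha.nonneg n) (by positivity)
  nlinarith

theorem discr_radius_eq_one (ha : IsBinaryPolyaSeq a) (hτ : IsRadiusOfConv a τ) :
    2 * τ ^ 2 + τ ^ 2 * ∑' n, a n * (τ ^ 2) ^ n = 1 := by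
  have hτ0 := ha.radius_pos hτ
  have hτ2 : τ ^ 2 < τ := by nlinarith [ha.radius_lt_one hτ]
  set φ : ℝ → ℝ := fun x => 2 * x ^ 2 + x ^ 2 * ∑' n, a n * (x ^ 2) ^ n
  have hφ : ContinuousAt φ τ := by
    obtain ⟨c, hc, hcτ⟩ := exists_between hτ2
    have hT := continuousAt_tsum_mul_pow (hτ.1 c ((sq_nonneg τ).trans hc.le) hcτ)
      (by rwa [abs_of_nonneg (sq_nonneg τ)])
    have := hT.comp (f := fun x : ℝ => x ^ 2) (continuous_pow 2).continuousAt
    exact (continuousAt_id.pow 2).const_mul 2 |>.add ((continuousAt_id.pow 2).mul this)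
  have hsq : ∀ᶠ x in 𝓝 τ, x ^ 2 < τ :=
    ((continuous_pow 2).continuousAt.eventually_lt continuousAt_const hτ2)
  apply le_antisymm
  · refine le_of_tendsto (hφ.tendsto.mono_left (nhdsWithin_le_nhds (s := Set.Iio τ))) ?_
    filter_upwards [Ioo_mem_nhdsLT hτ0, nhdsWithin_le_nhds hsq] with x ⟨hx0, hxτ⟩ hx2
    exact (ha.summable_iff hx0 (hτ.summable_of_nonneg ha.nonneg (sq_nonneg x) hx2)).1
      (hτ.summable_of_nonneg ha.nonneg hx0.le hxτ)
  · by_contra! hlt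
    obtain ⟨x, ⟨hφx, hx2⟩, hτx⟩ :=
      (((hφ.eventually_lt continuousAt_const hlt).and hsq).filter_mono nhdsWithin_le_nhds
        |>.and (self_mem_nhdsWithin (s := Set.Ioi τ))).exists
    have hx0 : 0 < x := hτ0.trans hτx
    have hx1 := (ha.summable_iff hx0 (hτ.summable_of_nonneg ha.nonneg (sq_nonneg x) hx2)).2 hφx.le
    exact not_le.2 hτx (hτ.le_of_summable_of_nonneg ha.nonneg hx1)

theorem tsum_eq_one_div (ha : IsBinaryPolyaSeq a) {x : ℝ} (hx : 0 < x)
    (hx1 : Summable fun n => a n * x ^ n) (hx2 : Summable fun n => a n * (x ^ 2) ^ n)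
    (hdisc : 2 * x ^ 2 + x ^ 2 * ∑' n, a n * (x ^ 2) ^ n = 1) :
    ∑' n, a n * x ^ n = 1 / x := by
  have := ha.add_le_tsum hx.le hx1 hx2
  have hxT : x * ∑' n, a n * x ^ n = 1 := by
    nlinarith [sq_nonneg (x * ∑' n, a n * x ^ n - 1)]
  rw [eq_div_iff hx.ne', mul_comm, hxT]

end IsBinaryPolyaSeq

theorem isBinaryPolyaSeq_of_recurrence (t : ℕ → ℚ) (h1 : t 1 = 1)
    (heven : ∀ n : ℕ, Even n → t n = 0)
    (hrec : ∀ n : ℕ, 3 ≤ n → Odd n →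
      t n = (1 / 2) * (∑ i ∈ Icc 1 (n - 2), t i * t (n - 1 - i)) + (1 / 2) * t ((n - 1) / 2)) :
    IsBinaryPolyaSeq fun n => (t n : ℝ) := by
  have h0 : t 0 = 0 := heven 0 Even.zero
  refine ⟨by simp [h0], fun n => ?_⟩
  suffices hq : t (n + 1) = (if n = 0 then 1 else 0) +
      (∑ p ∈ antidiagonal n, t p.1 * t p.2) / 2 + (if Even n then t (n / 2) else 0) / 2 by
    have := congrArg (Rat.cast : ℚ → ℝ) hq
    push_cast [apply_ite] at this
    exact this
  rcases Nat.even_or_odd n with hn | hn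
  · rcases eq_or_ne n 0 with rfl | hn0
    · simp [h1, h0]
    have hn2 : 2 ≤ n := by obtain ⟨k, hk⟩ := hn; omega
    have hconv : ∑ p ∈ antidiagonal n, t p.1 * t p.2 = ∑ i ∈ Icc 1 (n - 1), t i * t (n - i) := by
      rw [Nat.sum_antidiagonal_eq_sum_range_succ (fun i j => t i * t j)]
      refine (sum_subset (fun i hi => by simp at hi ⊢; omega) fun i hi hi' => ?_).symm
      obtain rfl | rfl : i = 0 ∨ i = n := by simp at hi hi'; omega
      all_goals simp [h0]
    rw [hrec (n + 1) (by omega) hn.add_one, if_neg hn0, if_pos hn, hconv,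
      show n + 1 - 2 = n - 1 by omega, show (n + 1 - 1) / 2 = n / 2 by omega]
    simp only [Nat.add_sub_cancel]
    ring
  · have hconv : ∑ p ∈ antidiagonal n, t p.1 * t p.2 = 0 := sum_eq_zero fun p hp => by
      rcases Nat.even_or_odd p.1 with hp1 | hp1
      · rw [heven _ hp1, zero_mul]
      · have : Even p.2 := by
          rw [← mem_antidiagonal.1 hp] at hn
          exact (Nat.odd_add.1 hn).1 hp1
        rw [heven _ this, mul_zero]
    rw [heven _ hn.add_one, hconv, if_neg (by rintro rfl; simp at hn),
      if_neg (Nat.not_even_iff_odd.2 hn)]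
    norm_num

theorem binary_polya_radius_and_value_general
    (t2 : ℕ → ℚ)
    (h1 : t2 1 = 1)
    (heven : ∀ n : ℕ, Even n → t2 n = 0)
    (hrec : ∀ n : ℕ, 3 ≤ n → Odd n →
      t2 n = (1 / 2) * (∑ i ∈ Finset.Icc 1 (n - 2), t2 i * t2 (n - 1 - i)) +
        (1 / 2) * t2 ((n - 1) / 2))
    (τ : ℝ) (hτ : IsRadiusOfConv (fun n => (t2 n : ℝ)) τ) :
    0 < τ ∧ τ < 1 ∧
      Summable (fun n : ℕ => (t2 n : ℝ) * τ ^ n) ∧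
      ∑' n : ℕ, (t2 n : ℝ) * τ ^ n = 1 / τ := by
  have ha := isBinaryPolyaSeq_of_recurrence t2 h1 heven hrec
  have hτ0 := ha.radius_pos hτ
  have hτ1 := ha.radius_lt_one hτ
  have hτ2 : Summable fun n => (t2 n : ℝ) * (τ ^ 2) ^ n :=
    hτ.summable_of_nonneg ha.nonneg (sq_nonneg τ) (by nlinarith)
  have hdisc := ha.discr_radius_eq_one hτ
  have hsum := (ha.summable_iff hτ0 hτ2).2 hdisc.le
  exact ⟨hτ0, hτ1, hsum, ha.tsum_eq_one_div hτ0 hsum hτ2 hdisc⟩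

/-- for the counting sequence `t₂` of binary Pólya trees (every node has
outdegree 0 or 2), the radius of convergence `τ` of `∑ t₂(n)·z^n` satisfies `0 < τ < 1`
and the series converges at `z = τ` with `∑' n, t₂(n)·τ^n = 1/τ` (i.e. `T₂(τ) = τ⁻¹`). -/
theorem binary_polya_radius_and_value
    (t2 : ℕ → ℚ)
    (h1 : t2 1 = 1)
    (heven : ∀ n : ℕ, Even n → t2 n = 0)
    (h0 : t2 0 = 0)
    (hrec : ∀ n : ℕ, 3 ≤ n → Odd n →
      t2 n = (1 / 2) * (∑ i ∈ Finset.Icc 1 (n - 2), t2 i * t2 (n - 1 - i)) +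
        (1 / 2) * t2 ((n - 1) / 2))
    (τ : ℝ) (hτ : IsRadiusOfConv (fun n => (t2 n : ℝ)) τ) :
    0 < τ ∧ τ < 1 ∧
      Summable (fun n : ℕ => (t2 n : ℝ) * τ ^ n) ∧
      ∑' n : ℕ, (t2 n : ℝ) * τ ^ n = 1 / τ :=
  binary_polya_radius_and_value_general t2 h1 heven hrec τ hτ
end
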